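/- Fix a finite nonempty state space S, horizon H ≥ 1, finite nonempty action sets A₁, A₂ with A = A₁ × A₂, a deterministic target policy π†, b > 0, and ι ∈ (0, b). Let R̂ be the constructed rewards: R̂_h(s, π†_h(s)) = 0; R̂_h(s, (π†_{1,h}(s), a₂)) = −b for a₂ ≠ π†_{2,h}(s); R̂_h(s, (a₁, π†_{2,h}(s))) = b for a₁ ≠ π†_{1,h}(s); and R̂_h(s, (a₁, a₂)) = 0 for a₁ ≠ π†_{1,h}(s), a₂ ≠ π†_{2,h}(s). Then for any transition kernels P_h : S × A → Δ(S) and any rewards R with |R_h(s, a) − R̂_h(s, a)| ≤ (b − ι)/(4H) for all h, s, a, the Q function induced by (P, R) lies in the ι-strict unique Nash set U̲(π†; ι); consequently, π† is the unique Markov perfect equilibrium of the induced Q function among all stochastic Markov policies. -/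

import Mathlib

open Finset

/-- A mixed strategy: nonnegative weights summing to one. -/
def IsMixed {α : Type*} [Fintype α] (p : α → ℝ) : Prop :=
  (∀ a, 0 ≤ p a) ∧ ∑ a, p a = 1

/-- The point-mass distribution at `a`. -/
def pmass {α : Type*} [DecidableEq α] (a : α) : α → ℝ :=
  fun x => if x = a then 1 else 0

/-- Expected reward of a mixed strategy profile `(p, q)` in the game with reward `R`. -/
def expR {A₁ A₂ : Type*} [Fintype A₁] [Fintype A₂]
    (R : A₁ × A₂ → ℝ) (p : A₁ → ℝ) (q : A₂ → ℝ) : ℝ :=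
  ∑ a₁, ∑ a₂, p a₁ * q a₂ * R (a₁, a₂)

/-- `(p, q)` is a (mixed) Nash equilibrium of the zero-sum game with reward `R`
(player 1 minimizes `R`, player 2 maximizes `R`). -/
def IsNE {A₁ A₂ : Type*} [Fintype A₁] [Fintype A₂] [DecidableEq A₁] [DecidableEq A₂]
    (R : A₁ × A₂ → ℝ) (p : A₁ → ℝ) (q : A₂ → ℝ) : Prop :=
  IsMixed p ∧ IsMixed q ∧
  (∀ a₂, expR R p (pmass a₂) ≤ expR R p q) ∧
  (∀ a₁, expR R p q ≤ expR R (pmass a₁) q)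

/-- The set of all mixed Nash equilibria of the game with reward `R`. -/
def NESet {A₁ A₂ : Type*} [Fintype A₁] [Fintype A₂] [DecidableEq A₁] [DecidableEq A₂]
    (R : A₁ × A₂ → ℝ) : Set ((A₁ → ℝ) × (A₂ → ℝ)) :=
  {pq | IsNE R pq.1 pq.2}

/-- The pure strategy profile `π` is a strict Nash equilibrium of the game with reward `R`. -/
def IsStrictNE {A₁ A₂ : Type*} (R : A₁ × A₂ → ℝ) (π : A₁ × A₂) : Prop :=
  (∀ a₂, a₂ ≠ π.2 → R (π.1, a₂) < R π) ∧
  (∀ a₁, a₁ ≠ π.1 → R π < R (a₁, π.2))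

/-- The minimax value of a finite two-player zero-sum game:
`val(G) = inf_{p ∈ Δ(A₁)} sup_{q ∈ Δ(A₂)} G((p, q))`. -/
noncomputable def gameValue {A₁ A₂ : Type*} [Fintype A₁] [Fintype A₂]
    (G : A₁ × A₂ → ℝ) : ℝ :=
  sInf {v | ∃ p, IsMixed p ∧ v = sSup {w | ∃ q, IsMixed q ∧ w = expR G p q}}

/-- The Q function induced by transition kernels `P` and rewards `R` over horizon `H`
via backward recursion: `Q H = 0` beyond the horizon, and for `h < H`,
`Q h s a = R h s a + Σ_{s'} P h s a s' · val(Q (h+1) s' ·)`.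
Periods are indexed `0, 1, …, H - 1`. -/
noncomputable def inducedQ {S A₁ A₂ : Type*} [Fintype S] [Fintype A₁] [Fintype A₂]
    (H : ℕ) (P : ℕ → S → A₁ × A₂ → S → ℝ) (R : ℕ → S → A₁ × A₂ → ℝ) :
    ℕ → S → A₁ × A₂ → ℝ :=
  fun h =>
    if _hh : h < H then
      fun s a => R h s a + ∑ s', P h s a s' * gameValue (inducedQ H P R (h + 1) s')
    else fun _ _ => 0
  termination_by h => H - h
  decreasing_by omega

/-- A stochastic Markov policy `σ` is a Markov perfect equilibrium of the Q function `Q`: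
at every period `h` and state `s`, `σ h s` is a Nash equilibrium of the stage game. -/
def IsMPE {S A₁ A₂ : Type*} [Fintype A₁] [Fintype A₂] [DecidableEq A₁] [DecidableEq A₂]
    {H : ℕ} (Q : Fin H → S → A₁ × A₂ → ℝ)
    (σ : Fin H → S → (A₁ → ℝ) × (A₂ → ℝ)) : Prop :=
  ∀ h s, IsNE (Q h s) (σ h s).1 (σ h s).2

/-- The set of all Markov perfect equilibria (stochastic Markov policies) of `Q`. -/
def MPESet {S A₁ A₂ : Type*} [Fintype A₁] [Fintype A₂] [DecidableEq A₁] [DecidableEq A₂]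
    {H : ℕ} (Q : Fin H → S → A₁ × A₂ → ℝ) :
    Set (Fin H → S → (A₁ → ℝ) × (A₂ → ℝ)) :=
  {σ | IsMPE Q σ}

/-- The stochastic Markov policy corresponding to a deterministic policy `π`
(point masses in every period and state). -/
def detPolicy {S A₁ A₂ : Type*} [DecidableEq A₁] [DecidableEq A₂] {H : ℕ}
    (π : Fin H → S → A₁ × A₂) : Fin H → S → (A₁ → ℝ) × (A₂ → ℝ) :=
  fun h s => (pmass (π h s).1, pmass (π h s).2)

section Aux

variable {A₁ A₂ : Type*} [Fintype A₁] [Fintype A₂] [DecidableEq A₁] [DecidableEq A₂]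

lemma pmass_mixed {α : Type*} [Fintype α] [DecidableEq α] (a : α) : IsMixed (pmass a) := by
  constructor
  · intro x; unfold pmass; split <;> norm_num
  · simp [pmass]

lemma expR_pmass_right (G : A₁ × A₂ → ℝ) (p : A₁ → ℝ) (a₂ : A₂) :
    expR G p (pmass a₂) = ∑ a₁, p a₁ * G (a₁, a₂) := by
  unfold expR pmass
  refine Finset.sum_congr rfl fun a₁ _ => ?_
  rw [Finset.sum_eq_single a₂] <;> simp +contextual

lemma expR_pmass_left (G : A₁ × A₂ → ℝ) (a₁ : A₁) (q : A₂ → ℝ) :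
    expR G (pmass a₁) q = ∑ a₂, q a₂ * G (a₁, a₂) := by
  unfold expR pmass
  rw [Finset.sum_eq_single a₁] <;> simp +contextual

lemma expR_pmass_pmass (G : A₁ × A₂ → ℝ) (a₁ : A₁) (a₂ : A₂) :
    expR G (pmass a₁) (pmass a₂) = G (a₁, a₂) := by
  rw [expR_pmass_left, Finset.sum_eq_single a₂] <;> simp +contextual [pmass]

lemma expR_le_of_row_bound (G : A₁ × A₂ → ℝ) (a₁ : A₁) {q : A₂ → ℝ} (hq : IsMixed q)
    (M : ℝ) (hM : ∀ a₂, G (a₁, a₂) ≤ M) :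
    expR G (pmass a₁) q ≤ M := by
  rw [expR_pmass_left]
  calc ∑ a₂, q a₂ * G (a₁, a₂) ≤ ∑ a₂, q a₂ * M := by
        refine Finset.sum_le_sum fun a₂ _ => ?_
        exact mul_le_mul_of_nonneg_left (hM a₂) (hq.1 a₂)
    _ = M := by rw [← Finset.sum_mul, hq.2, one_mul]

lemma expR_ge_of_col_bound (G : A₁ × A₂ → ℝ) (a₂ : A₂) {p : A₁ → ℝ} (hp : IsMixed p)
    (m : ℝ) (hm : ∀ a₁, m ≤ G (a₁, a₂)) :
    m ≤ expR G p (pmass a₂) := by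
  rw [expR_pmass_right]
  calc m = ∑ a₁, p a₁ * m := by rw [← Finset.sum_mul, hp.2, one_mul]
    _ ≤ ∑ a₁, p a₁ * G (a₁, a₂) := by
        refine Finset.sum_le_sum fun a₁ _ => ?_
        exact mul_le_mul_of_nonneg_left (hm a₁) (hp.1 a₁)

lemma expR_abs_bound (G : A₁ × A₂ → ℝ) {p : A₁ → ℝ} {q : A₂ → ℝ}
    (hp : IsMixed p) (hq : IsMixed q) (C : ℝ) (hC : ∀ a, |G a| ≤ C) :
    expR G p q ≤ C := by
  unfold expR
  calc ∑ a₁, ∑ a₂, p a₁ * q a₂ * G (a₁, a₂)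
      ≤ ∑ a₁, ∑ a₂, p a₁ * q a₂ * C := by
        refine Finset.sum_le_sum fun a₁ _ => Finset.sum_le_sum fun a₂ _ => ?_
        exact mul_le_mul_of_nonneg_left (le_trans (le_abs_self _) (hC _))
          (mul_nonneg (hp.1 a₁) (hq.1 a₂))
    _ = C := by
        simp only [mul_assoc, ← Finset.mul_sum]
        simp only [← Finset.sum_mul]
        rw [hp.2, hq.2]; ring

/-- If `(x, y)` is a (weak) pure saddle point of `G`, the game value is `G (x, y)`. -/
lemma gameValue_saddle (G : A₁ × A₂ → ℝ) (x : A₁) (y : A₂)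
    (h2 : ∀ a₂, G (x, a₂) ≤ G (x, y)) (h1 : ∀ a₁, G (x, y) ≤ G (a₁, y)) :
    gameValue G = G (x, y) := by
  have hB : ∀ p : A₁ → ℝ, IsMixed p →
      G (x, y) ≤ sSup {w | ∃ q, IsMixed q ∧ w = expR G p q} := by
    intro p hp
    have hmem : expR G p (pmass y) ∈ {w | ∃ q, IsMixed q ∧ w = expR G p q} :=
      ⟨pmass y, pmass_mixed y, rfl⟩
    have hbdd : BddAbove {w | ∃ q, IsMixed q ∧ w = expR G p q} := by
      refine ⟨∑ a, |G a|, ?_⟩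
      rintro w ⟨q, hq, rfl⟩
      exact expR_abs_bound G hp hq _ fun a =>
        Finset.single_le_sum (f := fun a' => |G a'|) (fun _ _ => abs_nonneg _)
          (Finset.mem_univ a)
    exact le_trans (expR_ge_of_col_bound G y hp _ h1) (le_csSup hbdd hmem)
  have hx : sSup {w | ∃ q, IsMixed q ∧ w = expR G (pmass x) q} = G (x, y) := by
    apply IsGreatest.csSup_eq
    constructor
    · exact ⟨pmass y, pmass_mixed y, (expR_pmass_pmass G x y).symm⟩
    · rintro w ⟨q, hq, rfl⟩
      exact expR_le_of_row_bound G x hq _ h2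
  apply IsLeast.csInf_eq
  constructor
  · exact ⟨pmass x, pmass_mixed x, hx.symm⟩
  · rintro v ⟨p, hp, rfl⟩
    exact hB p hp

/-- In a zero-sum game with an `ι`-strict pure Nash equilibrium `(x, y)`,
the point-mass pair is the unique mixed Nash equilibrium. -/
lemma NESet_strict (G : A₁ × A₂ → ℝ) (x : A₁) (y : A₂) (ι : ℝ) (hι : 0 < ι)
    (h2 : ∀ a₂, a₂ ≠ y → G (x, a₂) + ι ≤ G (x, y))
    (h1 : ∀ a₁, a₁ ≠ x → G (x, y) ≤ G (a₁, y) - ι) :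
    NESet G = {(pmass x, pmass y)} := by
  have hGxy2 : ∀ a₂, G (x, a₂) ≤ G (x, y) := by
    intro a₂; by_cases h : a₂ = y
    · exact le_of_eq (by rw [h])
    · linarith [h2 a₂ h]
  have hGxy1 : ∀ a₁, G (x, y) ≤ G (a₁, y) := by
    intro a₁; by_cases h : a₁ = x
    · exact le_of_eq (by rw [h])
    · linarith [h1 a₁ h]
  ext pq
  obtain ⟨p, q⟩ := pq
  simp only [NESet, Set.mem_setOf_eq, Set.mem_singleton_iff, Prod.mk.injEq]
  constructor
  · rintro ⟨hp, hq, hne2, hne1⟩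
    have c1 : G (x, y) ≤ expR G p (pmass y) := expR_ge_of_col_bound G y hp _ hGxy1
    have c2 : expR G p (pmass y) ≤ expR G p q := hne2 y
    have c3 : expR G p q ≤ expR G (pmass x) q := hne1 x
    have c4 : expR G (pmass x) q ≤ G (x, y) := expR_le_of_row_bound G x hq _ hGxy2
    have e1 : expR G p (pmass y) = G (x, y) := le_antisymm (by linarith) c1
    have e4 : expR G (pmass x) q = G (x, y) := le_antisymm c4 (by linarith)
    constructor
    · -- p = pmass x
      rw [expR_pmass_right] at e1
      have hs : ∑ a₁, p a₁ * G (x, y) = G (x, y) := by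
        rw [← Finset.sum_mul, hp.2, one_mul]
      have hsum : ∑ a₁, p a₁ * (G (a₁, y) - G (x, y)) = 0 := by
        simp only [mul_sub, Finset.sum_sub_distrib, e1, hs, sub_self]
      have hnn : ∀ a₁ ∈ Finset.univ, 0 ≤ p a₁ * (G (a₁, y) - G (x, y)) :=
        fun a₁ _ => mul_nonneg (hp.1 a₁) (by linarith [hGxy1 a₁])
      have hzero : ∀ a₁, a₁ ≠ x → p a₁ = 0 := by
        intro a₁ ha₁
        have := (Finset.sum_eq_zero_iff_of_nonneg hnn).1 hsum a₁ (Finset.mem_univ a₁)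
        have hgap : ι ≤ G (a₁, y) - G (x, y) := by linarith [h1 a₁ ha₁]
        by_contra hpne
        have hppos : 0 < p a₁ := lt_of_le_of_ne (hp.1 a₁) (Ne.symm hpne)
        nlinarith
      have hpx : p x = 1 := by
        have := hp.2
        rw [← Finset.add_sum_erase _ p (Finset.mem_univ x)] at this
        rw [Finset.sum_eq_zero (fun a ha => hzero a (Finset.ne_of_mem_erase ha))] at this
        linarith
      funext a
      by_cases ha : a = x
      · subst ha; simp [pmass, hpx]
      · simp [pmass, ha, hzero a ha]
    · -- q = pmass y
      rw [expR_pmass_left] at e4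
      have hs : ∑ a₂, q a₂ * G (x, y) = G (x, y) := by
        rw [← Finset.sum_mul, hq.2, one_mul]
      have hsum : ∑ a₂, q a₂ * (G (x, y) - G (x, a₂)) = 0 := by
        simp only [mul_sub, Finset.sum_sub_distrib, e4, hs, sub_self]
      have hnn : ∀ a₂ ∈ Finset.univ, 0 ≤ q a₂ * (G (x, y) - G (x, a₂)) :=
        fun a₂ _ => mul_nonneg (hq.1 a₂) (by linarith [hGxy2 a₂])
      have hzero : ∀ a₂, a₂ ≠ y → q a₂ = 0 := by
        intro a₂ ha₂
        have := (Finset.sum_eq_zero_iff_of_nonneg hnn).1 hsum a₂ (Finset.mem_univ a₂)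
        have hgap : ι ≤ G (x, y) - G (x, a₂) := by linarith [h2 a₂ ha₂]
        by_contra hqne
        have hqpos : 0 < q a₂ := lt_of_le_of_ne (hq.1 a₂) (Ne.symm hqne)
        nlinarith
      have hqy : q y = 1 := by
        have := hq.2
        rw [← Finset.add_sum_erase _ q (Finset.mem_univ y)] at this
        rw [Finset.sum_eq_zero (fun a ha => hzero a (Finset.ne_of_mem_erase ha))] at this
        linarith
      funext a
      by_cases ha : a = y
      · subst ha; simp [pmass, hqy]
      · simp [pmass, ha, hzero a ha]
  · rintro ⟨hp, hq⟩
    subst hp; subst hq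
    refine ⟨pmass_mixed x, pmass_mixed y, ?_, ?_⟩
    · intro a₂; rw [expR_pmass_pmass, expR_pmass_pmass]; exact hGxy2 a₂
    · intro a₁; rw [expR_pmass_pmass, expR_pmass_pmass]; exact hGxy1 a₁

end Aux

/-- Feasibility of the constructed reward attack for Markov games: for the constructed
rewards `R̂` with gap parameter `b`, any transition kernels `P`, and any rewards `R`
within `(b - ι)/(4H)` of `R̂` entrywise, the Q function induced by `(P, R)` lies in the
`ι`-strict unique Nash set `U̲(π†; ι)`; consequently the target deterministic policy
`π†` is the unique Markov perfect equilibrium of the induced Q function among all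
stochastic Markov policies. Periods are indexed `0, …, H - 1`. -/
theorem constructed_attack_feasible {S A₁ A₂ : Type*} [Fintype S] [Nonempty S]
    [Fintype A₁] [Fintype A₂] [DecidableEq A₁] [DecidableEq A₂] [Nonempty A₁] [Nonempty A₂]
    (H : ℕ) (hH : 1 ≤ H) (πd : ℕ → S → A₁ × A₂) (b ι : ℝ)
    (hb : 0 < b) (hι : 0 < ι) (hιb : ι < b)
    (P : ℕ → S → A₁ × A₂ → S → ℝ)
    (hP : ∀ h < H, ∀ s a, (∀ s', 0 ≤ P h s a s') ∧ ∑ s', P h s a s' = 1)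
    (Rhat : ℕ → S → A₁ × A₂ → ℝ)
    (hRhat : ∀ h < H, ∀ s, Rhat h s = fun a =>
      if a = πd h s then 0
      else if a.1 = (πd h s).1 then -b
      else if a.2 = (πd h s).2 then b
      else 0)
    (R : ℕ → S → A₁ × A₂ → ℝ)
    (hR : ∀ h < H, ∀ s a, |R h s a - Rhat h s a| ≤ (b - ι) / (4 * H)) :
    (∀ h < H, ∀ s,
      (∀ a₂, a₂ ≠ (πd h s).2 →
        inducedQ H P R h s ((πd h s).1, a₂) + ι ≤ inducedQ H P R h s (πd h s)) ∧
      (∀ a₁, a₁ ≠ (πd h s).1 →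
        inducedQ H P R h s (πd h s) ≤ inducedQ H P R h s (a₁, (πd h s).2) - ι)) ∧
    MPESet (fun h : Fin H => inducedQ H P R h.val) =
      {detPolicy (fun h : Fin H => πd h.val)} := by
  set ε := (b - ι) / (4 * H) with hε_def
  have hH0 : (0:ℝ) < H := by exact_mod_cast Nat.lt_of_lt_of_le Nat.zero_lt_one hH
  have hε0 : 0 ≤ ε := div_nonneg (by linarith) (by linarith)
  have hHε : (H:ℝ) * ε = (b - ι) / 4 := by
    rw [hε_def]; field_simp
  have hzeroval : gameValue (fun _ : A₁ × A₂ => (0:ℝ)) = 0 := by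
    simpa using gameValue_saddle (fun _ : A₁ × A₂ => (0:ℝ)) (Classical.arbitrary A₁)
      (Classical.arbitrary A₂) (fun _ => le_refl 0) (fun _ => le_refl 0)
  have key : ∀ k h, H ≤ h + k →
      (∀ s, |gameValue (inducedQ H P R h s)| ≤ ((H - h : ℕ) : ℝ) * ε) ∧
      (h < H → ∀ s,
        (∀ a₂, a₂ ≠ (πd h s).2 →
          inducedQ H P R h s ((πd h s).1, a₂) + ι ≤ inducedQ H P R h s (πd h s)) ∧
        (∀ a₁, a₁ ≠ (πd h s).1 →
          inducedQ H P R h s (πd h s) ≤ inducedQ H P R h s (a₁, (πd h s).2) - ι)) := by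
    intro k
    induction k with
    | zero =>
      intro h hh
      have hQ0 : inducedQ H P R h = fun _ _ => 0 := by
        rw [inducedQ, dif_neg (by omega)]
      refine ⟨?_, fun hlt => absurd hlt (by omega)⟩
      intro s
      rw [hQ0, hzeroval]
      have h0 : H - h = 0 := by omega
      simp [h0]
    | succ k ih =>
      intro h hh
      by_cases hlt : h < H
      swap
      · have hQ0 : inducedQ H P R h = fun _ _ => 0 := by
          rw [inducedQ, dif_neg hlt]
        refine ⟨?_, fun hlt' => absurd hlt' hlt⟩
        intro s
        rw [hQ0, hzeroval]
        have h0 : H - h = 0 := by omega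
        simp [h0]
      · have hVb := (ih (h + 1) (by omega)).1
        set Mb := ((H - (h + 1) : ℕ) : ℝ) * ε with hMb_def
        have hMb0 : 0 ≤ Mb := mul_nonneg (Nat.cast_nonneg _) hε0
        have hQ : inducedQ H P R h = fun s a =>
            R h s a + ∑ s', P h s a s' * gameValue (inducedQ H P R (h + 1) s') := by
          rw [inducedQ, dif_pos hlt]
        have hF : ∀ s a,
            |∑ s', P h s a s' * gameValue (inducedQ H P R (h + 1) s')| ≤ Mb := by
          intro s a
          calc |∑ s', P h s a s' * gameValue (inducedQ H P R (h + 1) s')|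
              ≤ ∑ s', |P h s a s' * gameValue (inducedQ H P R (h + 1) s')| :=
                Finset.abs_sum_le_sum_abs _ _
            _ ≤ ∑ s', P h s a s' * Mb := by
                refine Finset.sum_le_sum fun s' _ => ?_
                rw [abs_mul, abs_of_nonneg ((hP h hlt s a).1 s')]
                exact mul_le_mul_of_nonneg_left (hVb s') ((hP h hlt s a).1 s')
            _ = Mb := by rw [← Finset.sum_mul, (hP h hlt s a).2, one_mul]
        have hRd : ∀ s, |R h s (πd h s)| ≤ ε := by
          intro s
          have hr := hR h hlt s (πd h s)
          rw [hRhat h hlt s] at hr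
          simpa using hr
        have hR2 : ∀ s a₂, a₂ ≠ (πd h s).2 → R h s ((πd h s).1, a₂) ≤ -b + ε := by
          intro s a₂ ha
          have hr := hR h hlt s ((πd h s).1, a₂)
          rw [hRhat h hlt s] at hr
          have hne : ((πd h s).1, a₂) ≠ πd h s := fun hcon => ha (congrArg Prod.snd hcon)
          simp only [hne, if_false, if_true] at hr
          rw [abs_le] at hr
          simp at hr
          linarith [hr.2]
        have hR1 : ∀ s a₁, a₁ ≠ (πd h s).1 → b - ε ≤ R h s (a₁, (πd h s).2) := by
          intro s a₁ ha
          have hr := hR h hlt s (a₁, (πd h s).2)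
          rw [hRhat h hlt s] at hr
          have hne : (a₁, (πd h s).2) ≠ πd h s := fun hcon => ha (congrArg Prod.fst hcon)
          simp only [hne, if_false] at hr
          rw [abs_le] at hr
          simp [ha] at hr
          linarith [hr.1]
        have hMbε : Mb + ε = ((H - h : ℕ) : ℝ) * ε := by
          have hc : (H - h : ℕ) = (H - (h + 1) : ℕ) + 1 := by omega
          rw [hc, hMb_def]; push_cast; ring
        have hbound : ((H - h : ℕ) : ℝ) * ε ≤ (b - ι) / 4 := by
          rw [← hHε]
          exact mul_le_mul_of_nonneg_right (by exact_mod_cast Nat.sub_le H h) hε0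
        have hck : 2 * (Mb + ε) + ι ≤ b := by
          rw [hMbε]; linarith
        have gaps : ∀ s,
            (∀ a₂, a₂ ≠ (πd h s).2 →
              inducedQ H P R h s ((πd h s).1, a₂) + ι ≤ inducedQ H P R h s (πd h s)) ∧
            (∀ a₁, a₁ ≠ (πd h s).1 →
              inducedQ H P R h s (πd h s) ≤ inducedQ H P R h s (a₁, (πd h s).2) - ι) := by
          intro s
          constructor
          · intro a₂ ha
            have h1 := hF s ((πd h s).1, a₂)
            have h2 := hF s (πd h s)
            have h3 := hRd s
            have h4 := hR2 s a₂ ha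
            rw [abs_le] at h1 h2 h3
            rw [hQ]
            dsimp only
            linarith [h1.1, h1.2, h2.1, h2.2, h3.1, h3.2]
          · intro a₁ ha
            have h1 := hF s (a₁, (πd h s).2)
            have h2 := hF s (πd h s)
            have h3 := hRd s
            have h4 := hR1 s a₁ ha
            rw [abs_le] at h1 h2 h3
            rw [hQ]
            dsimp only
            linarith [h1.1, h1.2, h2.1, h2.2, h3.1, h3.2]
        refine ⟨?_, fun _ => gaps⟩
        intro s
        have hw2 : ∀ a₂, inducedQ H P R h s ((πd h s).1, a₂) ≤ inducedQ H P R h s (πd h s) := by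
          intro a₂
          by_cases ha : a₂ = (πd h s).2
          · subst ha; exact le_of_eq rfl
          · linarith [(gaps s).1 a₂ ha]
        have hw1 : ∀ a₁, inducedQ H P R h s (πd h s) ≤ inducedQ H P R h s (a₁, (πd h s).2) := by
          intro a₁
          by_cases ha : a₁ = (πd h s).1
          · subst ha; exact le_of_eq rfl
          · linarith [(gaps s).2 a₁ ha]
        have hval : gameValue (inducedQ H P R h s) = inducedQ H P R h s (πd h s) :=
          gameValue_saddle (inducedQ H P R h s) (πd h s).1 (πd h s).2 hw2 hw1
        rw [hval]
        have h2 := hF s (πd h s)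
        have h3 := hRd s
        rw [abs_le] at h2 h3
        rw [hQ]
        dsimp only
        rw [abs_le, ← hMbε]
        constructor <;> linarith [h2.1, h2.2, h3.1, h3.2]
  constructor
  · intro h hh s
    exact (key H h (by omega)).2 hh s
  · have stage : ∀ (h : Fin H) (s : S),
        NESet (inducedQ H P R h.val s) = {(pmass (πd h.val s).1, pmass (πd h.val s).2)} := by
      intro h s
      obtain ⟨g2, g1⟩ := (key H h.val (by omega)).2 h.isLt s
      exact NESet_strict _ _ _ ι hι g2 g1
    ext σ
    simp only [MPESet, Set.mem_setOf_eq, Set.mem_singleton_iff]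
    constructor
    · intro hσ
      funext h s
      have hmem : σ h s ∈ NESet (inducedQ H P R h.val s) := hσ h s
      rw [stage h s] at hmem
      simpa [detPolicy] using hmem
    · intro hσ
      subst hσ
      intro h s
      have hmem : detPolicy (fun h : Fin H => πd h.val) h s ∈
          NESet (inducedQ H P R h.val s) := by
        rw [stage h s]; rfl
      exact hmem
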